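/- Let D be a positive integer, let I be a proper subset of {1,...,D} with complement Ī, and let s, t : ℝ^{|I|} → ℝ^{|Ī|} be differentiable functions. Let f : ℝ^D → ℝ^D be the coupling layer f(v)_i = v_i for i ∈ I and f(v)_i = v_i · exp(s(v_I)_i) + t(v_I)_i for i ∈ Ī. Then f is differentiable at every v ∈ ℝ^D, and the determinant of its derivative (Jacobian) at v equals exp(∑_{i ∈ Ī} s(v_I)_i). In particular this determinant is strictly positive at every point. -/

import Mathlib

/-- A real NVP coupling layer on `ℝ^D` with passive index set `I` (whose complement `Ī` is
the active set) and scale and translation functions `s, t : ℝ^{|I|} → ℝ^{|Ī|}`: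
`f(v)_i = v_i` for `i ∈ I`, and `f(v)_i = v_i · exp(s(v_I)_i) + t(v_I)_i` for `i ∉ I`. -/
noncomputable def couplingLayer {D : ℕ} (I : Finset (Fin D))
    (s t : ({i : Fin D // i ∈ I} → ℝ) → ({i : Fin D // i ∉ I} → ℝ)) :
    (Fin D → ℝ) → (Fin D → ℝ) := fun v i =>
  if h : i ∈ I then v i
  else v i * Real.exp (s (fun j => v j.1) ⟨i, h⟩) + t (fun j => v j.1) ⟨i, h⟩

/-!
Along a direction `e_j` with `j ∉ I` the layer is affine,
`f (v + h e_j) = f v + h exp (s(v_I)_j) e_j`, so column `j` of the Jacobian is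
`exp (s(v_I)_j) e_j`, while the rows indexed by `I` are those of the identity. The Jacobian is
therefore block triangular with diagonal blocks `1` and `diag (exp ∘ s(v_I))`.
-/

theorem LinearMap.det_eq_prod_of_apply_eq_self_of_apply_single {R n : Type*} [CommRing R]
    [Fintype n] [DecidableEq n] (L : (n → R) →ₗ[R] n → R) (p : n → Prop) [DecidablePred p]
    (d : {j // ¬p j} → R) (hrow : ∀ i, p i → ∀ w, L w i = w i)
    (hcol : ∀ j (hj : ¬p j), L (Pi.single j 1) = Pi.single j (d ⟨j, hj⟩)) :
    L.det = ∏ j, d j := by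
  set M := LinearMap.toMatrix' L
  have hM : ∀ i j, M i j = L (Pi.single j 1) i := LinearMap.toMatrix'_apply L
  have hpassive : M.toSquareBlockProp p = 1 := by
    ext ⟨i, hi⟩ ⟨j, hj⟩
    simp [Matrix.toSquareBlockProp_def, hM, hrow i hi, Pi.single_apply, Matrix.one_apply]
  have hactive : M.toSquareBlockProp (¬p ·) = Matrix.diagonal d := by
    ext ⟨i, hi⟩ ⟨j, hj⟩
    rcases eq_or_ne i j with rfl | hij
    · simp [Matrix.toSquareBlockProp_def, hM, hcol i hj]
    · simp [Matrix.toSquareBlockProp_def, hM, hcol j hj, hij]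
  rw [← LinearMap.det_toMatrix', M.twoBlockTriangular_det' p, hpassive, hactive,
    Matrix.det_one, one_mul, Matrix.det_diagonal]
  intro i hi j hj
  rw [hM, hcol j hj, Pi.single_apply, if_neg (by rintro rfl; exact hj hi)]

section
variable {D : ℕ} {I : Finset (Fin D)}
  {s t : ({i : Fin D // i ∈ I} → ℝ) → ({i : Fin D // i ∉ I} → ℝ)}

theorem couplingLayer_apply_of_mem (v : Fin D → ℝ) {i : Fin D} (hi : i ∈ I) :
    couplingLayer I s t v i = v i := dif_pos hi

theorem couplingLayer_apply_of_notMem (v : Fin D → ℝ) {i : Fin D} (hi : i ∉ I) :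
    couplingLayer I s t v i
      = v i * Real.exp (s (fun j => v j.1) ⟨i, hi⟩) + t (fun j => v j.1) ⟨i, hi⟩ := dif_neg hi

theorem differentiable_couplingLayer (hs : Differentiable ℝ s) (ht : Differentiable ℝ t) :
    Differentiable ℝ (couplingLayer I s t) := by
  refine fun v => differentiableAt_pi.2 fun i => ?_
  by_cases hi : i ∈ I
  · simp only [couplingLayer_apply_of_mem _ hi]
    fun_prop
  · simp only [couplingLayer_apply_of_notMem _ hi]
    fun_prop

theorem couplingLayer_add_smul_single (v : Fin D → ℝ) {j : Fin D} (hj : j ∉ I) (h : ℝ) :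
    couplingLayer I s t (v + h • Pi.single j 1)
      = couplingLayer I s t v + h • Pi.single j (Real.exp (s (fun k => v k.1) ⟨j, hj⟩)) := by
  have hpassive : (fun k : {k // k ∈ I} => (v + h • Pi.single j 1 : Fin D → ℝ) k.1)
      = fun k => v k.1 := by
    funext k
    simp [show k.1 ≠ j by rintro rfl; exact hj k.2]
  funext i
  by_cases hi : i ∈ I
  · simp [couplingLayer_apply_of_mem _ hi, show i ≠ j by rintro rfl; exact hj hi]
  · rw [couplingLayer_apply_of_notMem _ hi, hpassive]
    by_cases hij : i = j
    · subst hij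
      simp [couplingLayer_apply_of_notMem _ hi]
      ring
    · simp [hij, couplingLayer_apply_of_notMem _ hi]

theorem fderiv_couplingLayer_apply_of_mem (hs : Differentiable ℝ s) (ht : Differentiable ℝ t)
    (v w : Fin D → ℝ) {i : Fin D} (hi : i ∈ I) :
    fderiv ℝ (couplingLayer I s t) v w i = w i := by
  have hrow := hasFDerivAt_pi'.1 (differentiable_couplingLayer hs ht v).hasFDerivAt i
  simp only [couplingLayer_apply_of_mem _ hi] at hrow
  exact congrArg (· w) (hrow.unique (hasFDerivAt_apply i v))

theorem fderiv_couplingLayer_single_of_notMem (hs : Differentiable ℝ s) (ht : Differentiable ℝ t)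
    (v : Fin D → ℝ) {j : Fin D} (hj : j ∉ I) :
    fderiv ℝ (couplingLayer I s t) v (Pi.single j 1)
      = Pi.single j (Real.exp (s (fun k => v k.1) ⟨j, hj⟩)) := by
  refine ((differentiable_couplingLayer hs ht v).hasFDerivAt.hasLineDerivAt _).unique ?_
  change HasDerivAt (fun h : ℝ => couplingLayer I s t (v + h • Pi.single j 1)) _ 0
  simp only [couplingLayer_add_smul_single v hj]
  simpa using ((hasDerivAt_id (0 : ℝ)).smul_const _).const_add (couplingLayer I s t v)

end

theorem coupling_layer_jacobian_det_general {D : ℕ}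
    (I : Finset (Fin D))
    (s t : ({i : Fin D // i ∈ I} → ℝ) → ({i : Fin D // i ∉ I} → ℝ))
    (hs : Differentiable ℝ s) (ht : Differentiable ℝ t) (v : Fin D → ℝ) :
    DifferentiableAt ℝ (couplingLayer I s t) v ∧
    (fderiv ℝ (couplingLayer I s t) v).det
      = Real.exp (∑ i : {i : Fin D // i ∉ I}, s (fun j => v j.1) i) ∧
    0 < (fderiv ℝ (couplingLayer I s t) v).det := by
  have hdet : (fderiv ℝ (couplingLayer I s t) v).det
      = Real.exp (∑ i : {i : Fin D // i ∉ I}, s (fun j => v j.1) i) := by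
    rw [Real.exp_sum]
    exact LinearMap.det_eq_prod_of_apply_eq_self_of_apply_single _ (· ∈ I) _
      (fun i hi w => fderiv_couplingLayer_apply_of_mem hs ht v w hi)
      (fun j hj => fderiv_couplingLayer_single_of_notMem hs ht v hj)
  exact ⟨differentiable_couplingLayer hs ht v, hdet, hdet ▸ Real.exp_pos _⟩

/-- If the scale and translation networks `s` and `t` are differentiable, then the coupling
layer `f` is differentiable at every `v ∈ ℝ^D`, and the determinant of its Fréchet
derivative (the Jacobian determinant) at `v` equals `exp(∑_{i ∈ Ī} s(v_I)_i)`; in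
particular this determinant is strictly positive at every point. -/
theorem coupling_layer_jacobian_det {D : ℕ} (hD : 0 < D)
    (I : Finset (Fin D)) (hI : I ⊂ Finset.univ)
    (s t : ({i : Fin D // i ∈ I} → ℝ) → ({i : Fin D // i ∉ I} → ℝ))
    (hs : Differentiable ℝ s) (ht : Differentiable ℝ t) (v : Fin D → ℝ) :
    DifferentiableAt ℝ (couplingLayer I s t) v ∧
    (fderiv ℝ (couplingLayer I s t) v).det
      = Real.exp (∑ i : {i : Fin D // i ∉ I}, s (fun j => v j.1) i) ∧
    0 < (fderiv ℝ (couplingLayer I s t) v).det :=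
  coupling_layer_jacobian_det_general I s t hs ht v
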